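/- arXiv:2006.10695 — 3 statements merged into one kernel-verified Lean document; each statement's English description precedes it below -/
import Mathlib

section
/- Let X₀,…,X_N be (not necessarily independent) centered Gaussian random variables with Var(Xₖ) ≤ δ² for all k. Then E[max_{0≤k≤N} |Xₖ|] ≤ δ·√(2 ln(2(N+1))). -/
open MeasureTheory ProbabilityTheory Real
open scoped NNReal

/-!
For `β > 0`, Jensen's inequality gives `exp (β 𝔼[max |Xₖ|]) ≤ 𝔼[exp (β max |Xₖ|)]`, and
`exp (β max |Xₖ|) ≤ ∑ₖ (exp (β Xₖ) + exp (-β Xₖ))`, whose expectation is at most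
`2 (N + 1) exp (δ² β² / 2)` by the Gaussian moment generating function. Taking logarithms,
`𝔼[max |Xₖ|] ≤ log (2 (N + 1)) / β + δ² β / 2`, and the choice `β = √(2 log (2 (N + 1))) / δ`
balances the two terms.
-/

open Finset

lemma exp_mul_iSup_abs_le_sum {ι : Type*} [Fintype ι] [Nonempty ι] (x : ι → ℝ) (β : ℝ) :
    exp (β * ⨆ k, |x k|) ≤ ∑ k, (exp (β * x k) + exp (-β * x k)) := by
  obtain ⟨j, hj⟩ := exists_eq_ciSup_of_finite (f := fun k => |x k|)
  rw [← hj]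
  calc exp (β * |x j|) ≤ exp (β * x j) + exp (-β * x j) := by
        rcases abs_choice (x j) with h | h
        · rw [h]
          linarith [exp_pos (-β * x j)]
        · rw [h, mul_neg, ← neg_mul]
          linarith [exp_pos (β * x j)]
    _ ≤ ∑ k, (exp (β * x k) + exp (-β * x k)) :=
        single_le_sum (f := fun k => exp (β * x k) + exp (-β * x k))
          (fun k _ => by positivity) (mem_univ j)

namespace ProbabilityTheory

section SubgaussianMGF

variable {Ω : Type*} [MeasurableSpace Ω] {μ : Measure Ω} {X : Ω → ℝ}

lemma HasSubgaussianMGF.mono {c d : ℝ≥0} (h : HasSubgaussianMGF X c μ) (hcd : c ≤ d) :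
    HasSubgaussianMGF X d μ where
  integrable_exp_mul := h.integrable_exp_mul
  mgf_le t := (h.mgf_le t).trans (exp_le_exp.2 (by gcongr))

lemma hasSubgaussianMGF_of_map_eq_gaussianReal {v : ℝ≥0} (h : μ.map X = gaussianReal 0 v) :
    HasSubgaussianMGF X v μ := by
  have hX : AEMeasurable X μ := aemeasurable_of_map_neZero (by rw [h]; infer_instance)
  refine (HasSubgaussianMGF.id_map_iff hX).1 ⟨fun t => ?_, fun t => ?_⟩
  · rw [h]
    exact integrable_exp_mul_gaussianReal t
  · rw [h, mgf_id_gaussianReal]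
    simp

lemma HasSubgaussianMGF.integrable_exp_add_exp_neg {c : ℝ≥0} (h : HasSubgaussianMGF X c μ)
    (β : ℝ) : Integrable (fun ω => exp (β * X ω) + exp (-β * X ω)) μ :=
  (h.integrable_exp_mul β).add (h.integrable_exp_mul (-β))

lemma HasSubgaussianMGF.integral_exp_add_exp_neg_le {c : ℝ≥0} (h : HasSubgaussianMGF X c μ)
    (β : ℝ) : ∫ ω, (exp (β * X ω) + exp (-β * X ω)) ∂μ ≤ 2 * exp (c * β ^ 2 / 2) := by
  rw [integral_add (h.integrable_exp_mul β) (h.integrable_exp_mul (-β))]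
  have hpos := h.mgf_le β
  have hneg := h.mgf_le (-β)
  rw [neg_sq] at hneg
  simp only [mgf] at hpos hneg
  linarith

end SubgaussianMGF

section MaxOfSubgaussian

variable {Ω : Type*} [MeasurableSpace Ω] {μ : Measure Ω}
  {ι : Type*} [Fintype ι] [Nonempty ι] {X : ι → Ω → ℝ} {c : ℝ≥0}

lemma integrable_iSup_abs (hX : ∀ k, Integrable (X k) μ) :
    Integrable (fun ω => ⨆ k, |X k ω|) μ := by
  refine (integrable_finsetSum univ fun k _ => (hX k).abs).mono'
    (AEMeasurable.iSup fun k => (hX k).aemeasurable.abs).aestronglyMeasurable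
    (ae_of_all _ fun ω => ?_)
  rw [norm_eq_abs, abs_of_nonneg (Real.iSup_nonneg fun k => abs_nonneg _)]
  exact ciSup_le fun k => single_le_sum (f := fun k => |X k ω|)
    (fun k _ => abs_nonneg _) (mem_univ k)

lemma integrable_exp_mul_iSup_abs (hX : ∀ k, HasSubgaussianMGF (X k) c μ) (β : ℝ) :
    Integrable (fun ω => exp (β * ⨆ k, |X k ω|)) μ := by
  refine (integrable_finsetSum univ fun k _ =>
    (hX k).integrable_exp_add_exp_neg β).mono' ?_
    (ae_of_all _ fun ω => ?_)
  · exact (AEMeasurable.iSup fun k => (hX k).aemeasurable.abs).const_mul β |>.exp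
      |>.aestronglyMeasurable
  · rw [norm_eq_abs, abs_of_pos (exp_pos _)]
    simpa using exp_mul_iSup_abs_le_sum (fun k => X k ω) β

lemma integral_exp_mul_iSup_abs_le (hX : ∀ k, HasSubgaussianMGF (X k) c μ) (β : ℝ) :
    ∫ ω, exp (β * ⨆ k, |X k ω|) ∂μ ≤ 2 * Fintype.card ι * exp (c * β ^ 2 / 2) :=
  calc ∫ ω, exp (β * ⨆ k, |X k ω|) ∂μ
      ≤ ∫ ω, ∑ k, (exp (β * X k ω) + exp (-β * X k ω)) ∂μ :=
        integral_mono_of_nonneg (ae_of_all _ fun ω => (exp_pos _).le)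
          (integrable_finsetSum univ fun k _ =>
            (hX k).integrable_exp_add_exp_neg β)
          (ae_of_all _ fun ω => exp_mul_iSup_abs_le_sum (fun k => X k ω) β)
    _ = ∑ k, ∫ ω, (exp (β * X k ω) + exp (-β * X k ω)) ∂μ :=
        integral_finsetSum univ fun k _ =>
          (hX k).integrable_exp_add_exp_neg β
    _ ≤ ∑ _k : ι, 2 * exp (c * β ^ 2 / 2) :=
        sum_le_sum fun k _ => (hX k).integral_exp_add_exp_neg_le β
    _ = 2 * Fintype.card ι * exp (c * β ^ 2 / 2) := by
        rw [sum_const, card_univ, nsmul_eq_mul]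
        ring

lemma integral_iSup_abs_le_of_pos [IsProbabilityMeasure μ]
    (hX : ∀ k, HasSubgaussianMGF (X k) c μ) {β : ℝ} (hβ : 0 < β) :
    ∫ ω, ⨆ k, |X k ω| ∂μ ≤ (log (2 * Fintype.card ι) + c * β ^ 2 / 2) / β := by
  have hM := integrable_iSup_abs fun k => (hX k).integrable
  have jensen : exp (β * ∫ ω, ⨆ k, |X k ω| ∂μ) ≤ ∫ ω, exp (β * ⨆ k, |X k ω|) ∂μ := by
    rw [← integral_const_mul]
    exact convexOn_exp.map_integral_le continuous_exp.continuousOn isClosed_univ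
      (ae_of_all _ fun _ => Set.mem_univ _) (hM.const_mul β) (integrable_exp_mul_iSup_abs hX β)
  have hexp : exp (β * ∫ ω, ⨆ k, |X k ω| ∂μ)
      ≤ exp (log (2 * Fintype.card ι) + c * β ^ 2 / 2) := by
    rw [exp_add, exp_log (by positivity)]
    exact jensen.trans (integral_exp_mul_iSup_abs_le hX β)
  rw [le_div_iff₀ hβ, mul_comm]
  exact exp_le_exp.1 hexp

lemma integral_iSup_abs_le_sqrt [IsProbabilityMeasure μ]
    (hX : ∀ k, HasSubgaussianMGF (X k) c μ) (hc : 0 < c) :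
    ∫ ω, ⨆ k, |X k ω| ∂μ ≤ √(2 * c * log (2 * Fintype.card ι)) := by
  set L := log (2 * Fintype.card ι)
  have hL : 0 < L := log_pos (by norm_cast; linarith [Fintype.card_pos (α := ι)])
  have hc' : (0 : ℝ) < c := hc
  have hs : 0 < √(2 * c * L) := sqrt_pos.2 (by positivity)
  have hs2 : √(2 * c * L) ^ 2 = 2 * c * L := sq_sqrt (by positivity)
  -- `β = √(2 L / c)` minimises `(L + c β² / 2) / β`
  refine (integral_iSup_abs_le_of_pos hX (div_pos hs hc')).trans_eq ?_
  field_simp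
  rw [hs2]
  ring

end MaxOfSubgaussian

end ProbabilityTheory

theorem pisier_max_gaussian_general
    {Ω : Type*} [MeasurableSpace Ω] (μ : Measure Ω) [IsProbabilityMeasure μ]
    (N : ℕ) (X : Fin (N + 1) → Ω → ℝ) (δ : ℝ) (hδ : 0 < δ)
    (hgauss : ∀ k, ∃ v : ℝ≥0, (v : ℝ) ≤ δ ^ 2 ∧
      Measure.map (X k) μ = gaussianReal 0 v) :
    ∫ ω, (⨆ k : Fin (N + 1), |X k ω|) ∂μ ≤
      δ * Real.sqrt (2 * Real.log (2 * (N + 1))) := by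
  have hX : ∀ k, HasSubgaussianMGF (X k) ⟨δ ^ 2, sq_nonneg δ⟩ μ := fun k => by
    obtain ⟨v, hv, hmap⟩ := hgauss k
    exact (hasSubgaussianMGF_of_map_eq_gaussianReal hmap).mono hv
  calc ∫ ω, (⨆ k : Fin (N + 1), |X k ω|) ∂μ
      ≤ √(2 * δ ^ 2 * log (2 * Fintype.card (Fin (N + 1)))) :=
        integral_iSup_abs_le_sqrt hX (NNReal.coe_pos.1 (pow_pos hδ 2))
    _ = δ * √(2 * log (2 * (N + 1))) := by
        rw [Fintype.card_fin, mul_comm 2 (δ ^ 2), mul_assoc, sqrt_mul (sq_nonneg δ),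
          sqrt_sq hδ.le, Nat.cast_succ]

/-- Pisier's lemma: if `X₀,…,X_N` are centered Gaussian random variables with
`Var(Xₖ) ≤ δ²`, then `E[max_k |Xₖ|] ≤ δ·√(2 ln(2(N+1)))`. -/
theorem pisier_max_gaussian
    {Ω : Type*} [MeasurableSpace Ω] (μ : Measure Ω) [IsProbabilityMeasure μ]
    (N : ℕ) (hN : 1 ≤ N) (X : Fin (N + 1) → Ω → ℝ) (δ : ℝ) (hδ : 0 < δ)
    (hmeas : ∀ k, Measurable (X k))
    (hgauss : ∀ k, ∃ v : ℝ≥0, (v : ℝ) ≤ δ ^ 2 ∧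
      Measure.map (X k) μ = gaussianReal 0 v) :
    ∫ ω, (⨆ k : Fin (N + 1), |X k ω|) ∂μ ≤
      δ * Real.sqrt (2 * Real.log (2 * (N + 1))) :=
  pisier_max_gaussian_general μ N X δ hδ hgauss
end

section
/- Let u⁰,…,u^M ∈ ℂ^{N+1} satisfy, for each m, the identity i(u_j^{m+1}-u_j^m)/Δt + (D₂ u^{m+1/2})_j + V_j^{m+1/2}·u_j^{m+1/2} = ((u_j^m+u_j^{m+1})/2)·g_j^m, where u^{m+1/2}=(u^m+u^{m+1})/2, D₂ is a real symmetric tridiagonal operator (with Neumann boundary closure), V_j^{m+1/2} is real, and g_j^m is real. Then the discrete mass M[u^m] = Σ_j |u_j^m|² is constant in m. -/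
open Complex Matrix
open scoped ComplexConjugate

/-!
Write the scheme as `i (u^{m+1} - u^m) / Δt = (g - V) u^{m+1/2} - D u^{m+1/2}`, pair it with
`u^{m+1/2}` and take imaginary parts. The right-hand side becomes real: the potential term is
`Σ (g - V)_j |u_j^{m+1/2}|²`, and `⟨u^{m+1/2}, D u^{m+1/2}⟩` is real because `D` is Hermitian.
On the left, `Re ⟨u^m + u^{m+1}, u^{m+1} - u^m⟩ = ‖u^{m+1}‖² - ‖u^m‖²`, so each step preserves the
mass.
-/

lemma Complex.re_conj_add_mul_sub (a b : ℂ) :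
    (conj (a + b) * (b - a)).re = normSq b - normSq a := by
  simp only [mul_re, conj_re, conj_im, add_re, add_im, sub_re, sub_im, normSq_apply]
  ring

section

variable {ι : Type*} [Fintype ι]

lemma Matrix.IsHermitian.im_star_dotProduct_eq_zero_of_add_mulVec_eq {A : Matrix ι ι ℂ}
    (hA : A.IsHermitian) (r : ι → ℝ) {z w : ι → ℂ} (h : ∀ j, z j + (A *ᵥ w) j = r j * w j) :
    (star w ⬝ᵥ z).im = 0 := by
  have hz : z = (fun j => (r j : ℂ) * w j) - A *ᵥ w := funext fun j => eq_sub_of_add_eq (h j)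
  have hpotential : (star w ⬝ᵥ fun j => (r j : ℂ) * w j).im = 0 := by
    simp only [dotProduct, Pi.star_apply, im_sum]
    refine Finset.sum_eq_zero fun j _ => ?_
    rw [mul_left_comm, star_def, conj_mul']
    norm_cast
  rw [hz, dotProduct_sub, sub_im, hpotential, ← RCLike.im_to_complex,
    hA.im_star_dotProduct_mulVec_self, sub_zero]

theorem sum_normSq_eq_of_crankNicolson_step {A : Matrix ι ι ℂ} (hA : A.IsHermitian)
    (r : ι → ℝ) {τ : ℝ} (hτ : τ ≠ 0) {a b : ι → ℂ}
    (h : ∀ j, I * (b j - a j) / τ + (A *ᵥ fun l => (a l + b l) / 2) j = r j * ((a j + b j) / 2)) :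
    ∑ j, normSq (b j) = ∑ j, normSq (a j) := by
  have him := hA.im_star_dotProduct_eq_zero_of_add_mulVec_eq r h
  have hpair : (star (fun l => (a l + b l) / 2) ⬝ᵥ fun j => I * (b j - a j) / τ) =
      (∑ j, conj (a j + b j) * (b j - a j)) * I / ((2 * τ : ℝ) : ℂ) := by
    simp only [dotProduct, Pi.star_apply, star_def, map_div₀, map_ofNat, Finset.sum_mul,
      Finset.sum_div]
    refine Finset.sum_congr rfl fun j _ => ?_
    push_cast
    ring
  rw [hpair, div_ofReal_im, mul_I_im, re_sum, div_eq_zero_iff] at him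
  simp only [re_conj_add_mul_sub, Finset.sum_sub_distrib] at him
  exact sub_eq_zero.mp (him.resolve_right (mul_ne_zero two_ne_zero hτ))

end

/-- Discrete mass conservation for the Crank–Nicholson-type schemes with real
multiplicative (Stratonovich-discretized) noise: if each time step satisfies
`i(u^{m+1}-u^m)/Δt + D₂ u^{m+1/2} + V^{m+1/2} ⊙ u^{m+1/2} = ((u^m+u^{m+1})/2) ⊙ g^m`
with `D₂` a real symmetric matrix and `V`, `g` real, then the discrete mass
`Σ_j |u_j^m|²` is constant in `m`. -/
theorem discrete_mass_conservation (N M : ℕ) (Δt : ℝ) (hΔt : 0 < Δt)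
    (D : Matrix (Fin (N + 1)) (Fin (N + 1)) ℝ) (hD : D.IsSymm)
    (u : ℕ → Fin (N + 1) → ℂ) (V g : ℕ → Fin (N + 1) → ℝ)
    (hscheme : ∀ m < M, ∀ j,
      Complex.I * (u (m + 1) j - u m j) / (Δt : ℂ) +
          (∑ l, (D j l : ℂ) * ((u m l + u (m + 1) l) / 2)) +
          (V m j : ℂ) * ((u m j + u (m + 1) j) / 2) =
        ((u m j + u (m + 1) j) / 2) * (g m j : ℂ)) :
    ∀ m ≤ M, ∑ j, ‖u m j‖ ^ 2 = ∑ j, ‖u 0 j‖ ^ 2 := by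
  have hDc : (D.map ((↑) : ℝ → ℂ)).IsHermitian :=
    (isHermitian_iff_isSymm.mpr hD).map _ fun x => (conj_ofReal x).symm
  have hstep : ∀ m < M, ∑ j, ‖u (m + 1) j‖ ^ 2 = ∑ j, ‖u m j‖ ^ 2 := by
    intro m hm
    simp only [Complex.sq_norm]
    refine sum_normSq_eq_of_crankNicolson_step hDc (g m - V m) hΔt.ne' fun j => ?_
    simp only [mulVec, dotProduct, map_apply, Pi.sub_apply, ofReal_sub]
    linear_combination hscheme m hm j
  intro m hm
  induction m with
  | zero => rfl
  | succ k ih => rw [hstep k hm, ih (Nat.le_of_succ_le hm)]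
end

section
/- Let A be a real symmetric matrix and v, w ∈ ℂ^n with w = (v+v')/2 for some v'. If i(v' - v) + A w + D w = c ⊙ w with D a real diagonal matrix and c a real vector (componentwise product), then Σ_j |v'_j|² = Σ_j |v_j|². -/
/-!
Pair the equation with the midpoint `w`. The matrix and diagonal terms together form the
Hermitian matrix `A + diag (d - c)`, whose quadratic form `⟨H w, w⟩` is real, while
`Im ⟨i (v' - v), (v + v') / 2⟩ = (‖v'‖² - ‖v‖²) / 2`.
-/

open Complex Matrix

open ComplexConjugate in
theorem Complex.im_conj_midpoint_mul_I_mul_sub (z z' : ℂ) :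
    (conj ((z + z') / 2) * (I * (z' - z))).im = (‖z'‖ ^ 2 - ‖z‖ ^ 2) / 2 := by
  simp only [Complex.sq_norm, normSq_apply, mul_im, mul_re, conj_re, conj_im, div_ofNat_re,
    div_ofNat_im, add_re, add_im, sub_re, sub_im, I_re, I_im]
  ring

theorem Matrix.IsHermitian.sum_norm_sq_eq_of_I_smul_sub_add_mulVec_eq_zero {ι : Type*}
    [Fintype ι] {H : Matrix ι ι ℂ} (hH : H.IsHermitian) {v v' w : ι → ℂ}
    (hw : ∀ j, w j = (v j + v' j) / 2) (h : I • (v' - v) + H *ᵥ w = 0) :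
    ∑ j, ‖v' j‖ ^ 2 = ∑ j, ‖v j‖ ^ 2 := by
  have him_zero : (star w ⬝ᵥ I • (v' - v)).im = 0 := by
    rw [eq_neg_of_add_eq_zero_left h, dotProduct_neg, neg_im, neg_eq_zero]
    exact hH.im_star_dotProduct_mulVec_self w
  have him_sum : (star w ⬝ᵥ I • (v' - v)).im = ∑ j, (‖v' j‖ ^ 2 - ‖v j‖ ^ 2) / 2 := by
    simp only [dotProduct, im_sum, Pi.star_apply, Pi.smul_apply, Pi.sub_apply, smul_eq_mul,
      RCLike.star_def, hw, im_conj_midpoint_mul_I_mul_sub]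
  rw [him_zero, ← Finset.sum_div, Finset.sum_sub_distrib] at him_sum
  linarith

/-- Abstract discrete mass conservation: if `A` is real symmetric, `D = diag d` real,
`c` real, `w = (v+v')/2` and `i(v'-v) + A w + D w = c ⊙ w`, then `Σ|v'_j|² = Σ|v_j|²`. -/
theorem abstract_mass_conservation (n : ℕ)
    (A : Matrix (Fin n) (Fin n) ℝ) (hA : A.IsSymm)
    (d c : Fin n → ℝ) (v v' w : Fin n → ℂ)
    (hw : ∀ j, w j = (v j + v' j) / 2)
    (heq : ∀ j, Complex.I * (v' j - v j) + (∑ l, (A j l : ℂ) * w l) +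
        (d j : ℂ) * w j = (c j : ℂ) * w j) :
    ∑ j, ‖v' j‖ ^ 2 = ∑ j, ‖v j‖ ^ 2 := by
  have hH : ((A + diagonal (d - c)).map ((↑) : ℝ → ℂ)).IsHermitian :=
    (isHermitian_iff_isSymm.mpr (hA.add (isSymm_diagonal _))).map _ fun _ ↦ (conj_ofReal _).symm
  refine hH.sum_norm_sq_eq_of_I_smul_sub_add_mulVec_eq_zero hw (funext fun j ↦ ?_)
  simp only [Pi.add_apply, Pi.smul_apply, Pi.sub_apply, smul_eq_mul, Pi.zero_apply, mulVec,
    dotProduct, map_apply, Matrix.add_apply, ofReal_add, add_mul, Finset.sum_add_distrib,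
    diagonal_apply, apply_ite ofReal, ofReal_zero, ite_mul, zero_mul, Finset.sum_ite_eq,
    Finset.mem_univ, if_true, ofReal_sub]
  linear_combination heq j
end
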